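/- Let q be a prime power, N ≥ 2, A a monic polynomial of degree N over F_q, and 0 ≤ h ≤ N-1, d ≥ 0 integers. Then the number of monic polynomials F of degree N with deg(F - A) ≤ h, all of whose irreducible factors have degree ≤ d, is at most the number of monic polynomials of degree h+1 all of whose irreducible factors have degree ≤ d. That is, Ψ(I(A,h), d) ≤ Ψ(h+1, d). -/

import Mathlib

/-!
Let `S` be a finite set of allowed primes consisting of all monic irreducibles of degree `< k`
and some of degree `k`, and put `m = h + 1`; induct on `deg A` and on `S`. If `S` contains every
monic irreducible of degree `≤ m`, then every monic polynomial of degree `m` is `S`-smooth and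
`F ↦ X ^ m + (F - A)` embeds the interval into them. Otherwise let `P ∈ S` have maximal degree
`k`, so `k ≤ m`. Members of the interval prime to `P` are smooth over `S \ {P}`, and those
divisible by `P` are `P` times members of the interval of radius `m - k` around `A /ₘ P`.
Dually, the `S`-smooth polynomials of degree `m` contain the disjoint union of the
`S \ {P}`-smooth ones and `P` times the `S`-smooth ones of degree `m - k`.
-/

open Polynomial

def IsSmooth (𝔽 : Type) [Field 𝔽] (d : ℕ) (F : 𝔽[X]) : Prop :=
  ∀ P : 𝔽[X], P.Monic → Irreducible P → P ∣ F → P.natDegree ≤ d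

noncomputable def Psi (𝔽 : Type) [Field 𝔽] [Fintype 𝔽] (n d : ℕ) : ℕ :=
  Nat.card {F : 𝔽[X] // F.Monic ∧ F.natDegree = n ∧ IsSmooth 𝔽 d F}

section DivByMonic

variable {R : Type*} [CommRing R] {A D F P : R[X]} {m : ℕ}

theorem degree_lt_sub_natDegree_of_monic_mul (hP : P.Monic) (h : (P * D).degree < m) :
    D.degree < ↑(m - P.natDegree) := by
  rcases eq_or_ne D 0 with rfl | hD
  · simp
  rw [← natDegree_lt_iff_degree_lt (hP.mul_right_ne_zero hD), hP.natDegree_mul' hD] at h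
  exact (natDegree_lt_iff_degree_lt hD).1 (by omega)

theorem degree_sub_divByMonic_lt [Nontrivial R] (hP : P.Monic) (hPm : P.natDegree ≤ m)
    (h : (P * F - A).degree < m) : (F - A /ₘ P).degree < ↑(m - P.natDegree) := by
  have hmod : (A %ₘ P).degree < m :=
    (degree_modByMonic_lt A hP).trans_le (degree_le_natDegree.trans (by exact_mod_cast hPm))
  have hsplit : P * (F - A /ₘ P) = (P * F - A) + A %ₘ P := by
    linear_combination -(modByMonic_add_div A P)
  refine degree_lt_sub_natDegree_of_monic_mul hP ?_
  rw [hsplit]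
  exact (degree_add_le _ _).trans_lt (max_lt h hmod)

theorem Polynomial.Monic.divByMonic_of_natDegree_le [Nontrivial R] (hA : A.Monic) (hP : P.Monic)
    (h : P.natDegree ≤ A.natDegree) : (A /ₘ P).Monic := by
  have hmod : (A %ₘ P).degree < A.degree := by
    refine (degree_modByMonic_lt A hP).trans_le ?_
    rw [degree_eq_natDegree hP.ne_zero, degree_eq_natDegree hA.ne_zero]
    exact_mod_cast h
  refine hP.of_mul_monic_left ?_
  rw [eq_sub_of_add_eq' (modByMonic_add_div A P)]
  exact hA.sub_of_left hmod

end DivByMonic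

section Smooth

variable {𝔽 : Type*} [Field 𝔽] {S : Finset 𝔽[X]} {A F G P : 𝔽[X]} {m n : ℕ}

def IsSmoothOver (S : Finset 𝔽[X]) (F : 𝔽[X]) : Prop :=
  ∀ P : 𝔽[X], P.Monic → Irreducible P → P ∣ F → P ∈ S

/-- Equivalently: all monic irreducibles of degree `< k` and some of degree `k`. -/
structure IsDegreeInitial (S : Finset 𝔽[X]) : Prop where
  monic : ∀ P ∈ S, P.Monic
  irreducible : ∀ P ∈ S, Irreducible P
  mem_of_natDegree_lt : ∀ P ∈ S, ∀ Q : 𝔽[X], Q.Monic → Irreducible Q →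
    Q.natDegree < P.natDegree → Q ∈ S

def smoothMonic (S : Finset 𝔽[X]) (n : ℕ) : Set 𝔽[X] :=
  {G | G.Monic ∧ G.natDegree = n ∧ IsSmoothOver S G}

/-- The smooth members of the short interval `I(A, m - 1)`; a strict degree bound lets `m = 0`
encode the interval `{A}`. -/
def smoothInterval (S : Finset 𝔽[X]) (A : 𝔽[X]) (m : ℕ) : Set 𝔽[X] :=
  {F ∈ smoothMonic S A.natDegree | (F - A).degree < m}

theorem IsSmoothOver.of_dvd (hF : IsSmoothOver S F) (hGF : G ∣ F) : IsSmoothOver S G :=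
  fun Q hQm hQirr hQG => hF Q hQm hQirr (hQG.trans hGF)

theorem IsSmoothOver.mul (hF : IsSmoothOver S F) (hG : IsSmoothOver S G) :
    IsSmoothOver S (F * G) := fun Q hQm hQirr hQFG =>
  (hQirr.prime.dvd_or_dvd hQFG).elim (hF Q hQm hQirr) (hG Q hQm hQirr)

theorem isSmoothOver_of_mem (hPS : P ∈ S) (hP : P.Monic) (hPirr : Irreducible P) :
    IsSmoothOver S P := fun Q hQm hQirr hQP => by
  rwa [eq_of_monic_of_associated hQm hP (hQirr.associated_of_dvd hPirr hQP)]

theorem IsSmoothOver.mono {T : Finset 𝔽[X]} (hF : IsSmoothOver S F) (hST : S ⊆ T) :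
    IsSmoothOver T F := fun Q hQm hQirr hQF => hST (hF Q hQm hQirr hQF)

theorem IsSmoothOver.isUnit_of_empty (hF : IsSmoothOver ∅ F) : IsUnit F := by
  by_contra hu
  obtain ⟨Q, hQm, hQirr, hQF⟩ := exists_monic_irreducible_factor F hu
  exact Finset.notMem_empty Q (hF Q hQm hQirr hQF)

section Erase

variable [DecidableEq 𝔽[X]]

theorem IsSmoothOver.erase (hF : IsSmoothOver S F) (hPF : ¬P ∣ F) :
    IsSmoothOver (S.erase P) F := fun Q hQm hQirr hQF =>
  Finset.mem_erase.2 ⟨by rintro rfl; exact hPF hQF, hF Q hQm hQirr hQF⟩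

theorem IsSmoothOver.not_dvd_of_erase (hF : IsSmoothOver (S.erase P) F) (hP : P.Monic)
    (hPirr : Irreducible P) : ¬P ∣ F := fun hPF =>
  Finset.notMem_erase P S (hF P hP hPirr hPF)

theorem IsDegreeInitial.erase (hS : IsDegreeInitial S)
    (hPmax : ∀ Q ∈ S, Q.natDegree ≤ P.natDegree) : IsDegreeInitial (S.erase P) where
  monic Q hQ := hS.monic Q (Finset.mem_of_mem_erase hQ)
  irreducible Q hQ := hS.irreducible Q (Finset.mem_of_mem_erase hQ)
  mem_of_natDegree_lt R hR Q hQm hQirr hQR := by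
    have hRS := Finset.mem_of_mem_erase hR
    refine Finset.mem_erase.2 ⟨?_, hS.mem_of_natDegree_lt R hRS Q hQm hQirr hQR⟩
    rintro rfl
    exact absurd (hPmax R hRS) (not_le.2 hQR)

theorem smoothInterval_subset_union (hP : P.Monic) (hPm : P.natDegree ≤ m) :
    smoothInterval S A m ⊆
      smoothInterval (S.erase P) A m ∪ (P * ·) '' smoothInterval S (A /ₘ P) (m - P.natDegree) := by
  rintro F ⟨⟨hFm, hFdeg, hFS⟩, hFA⟩
  by_cases hPF : P ∣ F
  · obtain ⟨F₁, rfl⟩ := hPF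
    have hF₁m : F₁.Monic := hP.of_mul_monic_left hFm
    refine Or.inr ⟨F₁, ⟨⟨hF₁m, ?_, hFS.of_dvd (dvd_mul_left _ _)⟩,
      degree_sub_divByMonic_lt hP hPm hFA⟩, rfl⟩
    rw [natDegree_divByMonic _ hP, ← hFdeg, hP.natDegree_mul hF₁m]
    omega
  · exact Or.inl ⟨⟨hFm, hFdeg, hFS.erase hPF⟩, hFA⟩

theorem union_subset_smoothMonic (hPS : P ∈ S) (hP : P.Monic) (hPirr : Irreducible P)
    (hPm : P.natDegree ≤ m) :
    smoothMonic (S.erase P) m ∪ (P * ·) '' smoothMonic S (m - P.natDegree) ⊆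
      smoothMonic S m := by
  rintro G (⟨hGm, hGdeg, hGS⟩ | ⟨G₁, ⟨hG₁m, hG₁deg, hG₁S⟩, rfl⟩)
  · exact ⟨hGm, hGdeg, hGS.mono (Finset.erase_subset P S)⟩
  · refine ⟨hP.mul hG₁m, ?_, (isSmoothOver_of_mem hPS hP hPirr).mul hG₁S⟩
    rw [hP.natDegree_mul hG₁m, hG₁deg]
    omega

theorem disjoint_smoothMonic_erase_image (hP : P.Monic) (hPirr : Irreducible P) (n n' : ℕ) :
    Disjoint (smoothMonic (S.erase P) n) ((P * ·) '' smoothMonic S n') := by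
  refine Set.disjoint_left.2 ?_
  rintro _ ⟨-, -, hGS⟩ ⟨G₁, -, rfl⟩
  exact hGS.not_dvd_of_erase hP hPirr (dvd_mul_right P G₁)

end Erase

end Smooth

section Counting

variable {𝔽 : Type*} [Field 𝔽] [Fintype 𝔽] {S : Finset 𝔽[X]} {A P : 𝔽[X]} {m : ℕ}

theorem finite_setOf_natDegree_le (n : ℕ) : {G : 𝔽[X] | G.natDegree ≤ n}.Finite := by
  have : Finite (degreeLT 𝔽 (n + 1)) := Finite.of_equiv _ (degreeLTEquiv 𝔽 (n + 1)).toEquiv.symm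
  refine (Set.toFinite (degreeLT 𝔽 (n + 1) : Set 𝔽[X])).subset fun G hG => ?_
  exact mem_degreeLT.2 (degree_le_natDegree.trans_lt (by exact_mod_cast Nat.lt_succ_of_le hG))

theorem finite_smoothMonic (S : Finset 𝔽[X]) (n : ℕ) : (smoothMonic S n).Finite :=
  (finite_setOf_natDegree_le n).subset fun _ hG => hG.2.1.le

theorem finite_smoothInterval (S : Finset 𝔽[X]) (A : 𝔽[X]) (m : ℕ) :
    (smoothInterval S A m).Finite :=
  (finite_smoothMonic S A.natDegree).subset (Set.sep_subset _ _)

theorem ncard_smoothInterval_le_of_forall_mem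
    (hS : ∀ Q : 𝔽[X], Q.Monic → Irreducible Q → Q.natDegree ≤ m → Q ∈ S) :
    (smoothInterval S A m).ncard ≤ (smoothMonic S m).ncard := by
  refine Set.ncard_le_ncard_of_injOn (fun F => X ^ m + (F - A)) ?_ ?_ (finite_smoothMonic S m)
  · rintro F ⟨-, hFA⟩
    have hmon : (X ^ m + (F - A)).Monic := monic_X_pow_add hFA
    have hdeg : (X ^ m + (F - A)).natDegree = m :=
      (natDegree_add_eq_left_of_degree_lt (by rwa [degree_X_pow])).trans (natDegree_X_pow m)
    refine ⟨hmon, hdeg, fun Q hQm hQirr hQdvd => hS Q hQm hQirr ?_⟩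
    exact hdeg ▸ natDegree_le_of_dvd hQdvd hmon.ne_zero
  · intro F _ G _ hFG
    simpa using hFG

theorem finite_setOf_monic_irreducible_natDegree_le (d : ℕ) :
    {P : 𝔽[X] | P.Monic ∧ Irreducible P ∧ P.natDegree ≤ d}.Finite :=
  (finite_setOf_natDegree_le d).subset fun _ hP => hP.2.2

section Erase

variable [DecidableEq 𝔽[X]]

theorem ncard_smoothInterval_le_add (hP : P.Monic) (hPm : P.natDegree ≤ m) :
    (smoothInterval S A m).ncard ≤
      (smoothInterval (S.erase P) A m).ncard +
        (smoothInterval S (A /ₘ P) (m - P.natDegree)).ncard :=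
  calc (smoothInterval S A m).ncard
      ≤ (smoothInterval (S.erase P) A m ∪
          (P * ·) '' smoothInterval S (A /ₘ P) (m - P.natDegree)).ncard :=
        Set.ncard_le_ncard (smoothInterval_subset_union hP hPm)
          ((finite_smoothInterval _ _ _).union ((finite_smoothInterval _ _ _).image _))
    _ ≤ _ := (Set.ncard_union_le _ _).trans
        (Nat.add_le_add_left (Set.ncard_image_le (finite_smoothInterval _ _ _)) _)

theorem ncard_smoothMonic_erase_add_le (hPS : P ∈ S) (hP : P.Monic) (hPirr : Irreducible P)
    (hPm : P.natDegree ≤ m) :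
    (smoothMonic (S.erase P) m).ncard + (smoothMonic S (m - P.natDegree)).ncard ≤
      (smoothMonic S m).ncard := by
  rw [← Set.ncard_image_of_injective (smoothMonic S (m - P.natDegree))
      (mul_right_injective₀ hP.ne_zero),
    ← Set.ncard_union_eq (disjoint_smoothMonic_erase_image hP hPirr _ _)
      (finite_smoothMonic _ _) ((finite_smoothMonic _ _).image _)]
  exact Set.ncard_le_ncard (union_subset_smoothMonic hPS hP hPirr hPm) (finite_smoothMonic _ _)

end Erase

theorem ncard_smoothInterval_le {S : Finset 𝔽[X]} (hS : IsDegreeInitial S) {A : 𝔽[X]}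
    (hA : A.Monic) {m : ℕ} (hm : m ≤ A.natDegree) :
    (smoothInterval S A m).ncard ≤ (smoothMonic S m).ncard := by
  classical
  induction hN : A.natDegree using Nat.strong_induction_on generalizing A S m with
  | _ N ihN =>
  induction S using Finset.strongInduction with
  | _ S ihS =>
  by_cases hall : ∀ Q : 𝔽[X], Q.Monic → Irreducible Q → Q.natDegree ≤ m → Q ∈ S
  · exact ncard_smoothInterval_le_of_forall_mem hall
  push Not at hall
  obtain ⟨Q, hQm, hQirr, hQdeg, hQS⟩ := hall
  obtain rfl | hSne := S.eq_empty_or_nonempty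
  · have hempty : smoothInterval ∅ A m = ∅ :=
      Set.eq_empty_of_forall_notMem fun F ⟨⟨_, hFdeg, hFS⟩, _⟩ => by
        have := natDegree_eq_zero_of_isUnit hFS.isUnit_of_empty
        have := hQirr.natDegree_pos
        omega
    simp [hempty]
  obtain ⟨P, hPS, hPmax⟩ := S.exists_max_image natDegree hSne
  have hP := hS.monic P hPS
  have hPirr := hS.irreducible P hPS
  have hPpos := hPirr.natDegree_pos
  have hPm : P.natDegree ≤ m :=
    (not_lt.1 fun hlt => hQS (hS.mem_of_natDegree_lt P hPS Q hQm hQirr hlt)).trans hQdeg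
  have hquot : (A /ₘ P).natDegree = N - P.natDegree := by rw [natDegree_divByMonic _ hP, hN]
  calc (smoothInterval S A m).ncard
      ≤ (smoothInterval (S.erase P) A m).ncard +
          (smoothInterval S (A /ₘ P) (m - P.natDegree)).ncard :=
        ncard_smoothInterval_le_add hP hPm
    _ ≤ (smoothMonic (S.erase P) m).ncard + (smoothMonic S (m - P.natDegree)).ncard :=
        Nat.add_le_add (ihS _ (Finset.erase_ssubset hPS) (hS.erase hPmax))
          (ihN _ (by omega) hS (hA.divByMonic_of_natDegree_le hP (by omega)) (by omega) hquot)
    _ ≤ (smoothMonic S m).ncard := ncard_smoothMonic_erase_add_le hPS hP hPirr hPm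

end Counting

noncomputable def monicIrreduciblesOfNatDegreeLE (𝔽 : Type*) [Field 𝔽] [Fintype 𝔽] (d : ℕ) :
    Finset 𝔽[X] :=
  (finite_setOf_monic_irreducible_natDegree_le d).toFinset

section SmoothOfDegree

variable {𝔽 : Type} [Field 𝔽] [Fintype 𝔽] {d : ℕ}

theorem mem_monicIrreduciblesOfNatDegreeLE {P : 𝔽[X]} :
    P ∈ monicIrreduciblesOfNatDegreeLE 𝔽 d ↔ P.Monic ∧ Irreducible P ∧ P.natDegree ≤ d :=
  by simp [monicIrreduciblesOfNatDegreeLE]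

theorem isDegreeInitial_monicIrreduciblesOfNatDegreeLE :
    IsDegreeInitial (monicIrreduciblesOfNatDegreeLE 𝔽 d) where
  monic _ hP := (mem_monicIrreduciblesOfNatDegreeLE.1 hP).1
  irreducible _ hP := (mem_monicIrreduciblesOfNatDegreeLE.1 hP).2.1
  mem_of_natDegree_lt _ hP _ hQm hQirr hQP := mem_monicIrreduciblesOfNatDegreeLE.2
    ⟨hQm, hQirr, hQP.le.trans (mem_monicIrreduciblesOfNatDegreeLE.1 hP).2.2⟩

theorem isSmooth_iff_isSmoothOver {F : 𝔽[X]} :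
    IsSmooth 𝔽 d F ↔ IsSmoothOver (monicIrreduciblesOfNatDegreeLE 𝔽 d) F := by
  simp only [IsSmooth, IsSmoothOver, mem_monicIrreduciblesOfNatDegreeLE]
  grind

end SmoothOfDegree

/-- explicit Hildebrand inequality `Ψ(I(A,h),d) ≤ Ψ(h+1,d)` for the
short interval `I(A,h) = {F monic of degree N : deg(F - A) ≤ h}`. -/
theorem stmt_5 (𝔽 : Type) [Field 𝔽] [Fintype 𝔽]
    (N h d : ℕ) (hN : 2 ≤ N) (hhN : h ≤ N - 1)
    (A : 𝔽[X]) (hA : A.Monic) (hAdeg : A.natDegree = N) :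
    Nat.card {F : 𝔽[X] // F.Monic ∧ F.natDegree = N ∧
        (F - A).degree ≤ (h : WithBot ℕ) ∧ IsSmooth 𝔽 d F} ≤
      Psi 𝔽 (h + 1) d := by
  calc Nat.card {F : 𝔽[X] // F.Monic ∧ F.natDegree = N ∧
          (F - A).degree ≤ (h : WithBot ℕ) ∧ IsSmooth 𝔽 d F}
      = (smoothInterval (monicIrreduciblesOfNatDegreeLE 𝔽 d) A (h + 1)).ncard := by
        rw [← Nat.card_coe_set_eq]
        refine Nat.card_congr (Equiv.subtypeEquivRight fun F => ?_)
        rw [isSmooth_iff_isSmoothOver, ← mem_degreeLE, ← degreeLT_succ_eq_degreeLE, mem_degreeLT,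
          ← hAdeg]
        simp only [smoothInterval, smoothMonic, Set.mem_ofPred_eq]
        tauto
    _ ≤ (smoothMonic (monicIrreduciblesOfNatDegreeLE 𝔽 d) (h + 1)).ncard :=
        ncard_smoothInterval_le isDegreeInitial_monicIrreduciblesOfNatDegreeLE hA (by omega)
    _ = Psi 𝔽 (h + 1) d := by
        rw [Psi, ← Nat.card_coe_set_eq]
        exact Nat.card_congr (Equiv.subtypeEquivRight fun G => by
          rw [isSmooth_iff_isSmoothOver]
          rfl)
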